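/- arXiv:1508.00951 — 5 statements merged into one kernel-verified Lean document; each statement's English description precedes it below -/
import Mathlib

section
/- Let H be an intersecting r-partite hypergraph with τ(H) = r in which every vertex has positive degree. Then every vertex of H has degree at least 2. -/
/-- A set of vertices `C` is a cover of the hypergraph `H` (a finite set of lines)
if every line contains a vertex of `C`. -/
def IsCover {α : Type*} (H : Finset (Finset α)) (C : Finset α) : Prop :=
  ∀ e ∈ H, ∃ v ∈ e, v ∈ C

/-- The covering number: the minimum size of a cover. -/
noncomputable def coverNumber {α : Type*} (H : Finset (Finset α)) : ℕ :=
  sInf {n | ∃ C : Finset α, IsCover H C ∧ C.card = n}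

/-- A matching is a set of pairwise disjoint lines of `H`. -/
def IsMatching {α : Type*} (H M : Finset (Finset α)) : Prop :=
  M ⊆ H ∧ ∀ e ∈ M, ∀ f ∈ M, e ≠ f → Disjoint e f

/-- The matching number: the maximum size of a matching. -/
noncomputable def matchingNumber {α : Type*} (H : Finset (Finset α)) : ℕ :=
  sSup {n | ∃ M : Finset (Finset α), IsMatching H M ∧ M.card = n}

/-- An `r`-partite hypergraph on vertex set `Fin r × V` (side `i` consists of the
vertices with first coordinate `i`): every line has exactly one vertex in each side. -/
def Rpartite {r : ℕ} {V : Type*} (H : Finset (Finset (Fin r × V))) : Prop :=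
  ∀ e ∈ H, ∀ i : Fin r, ∃! v : Fin r × V, v ∈ e ∧ v.1 = i

/-- `H` is intersecting: every two lines share at least one vertex. -/
def Intersecting {α : Type*} (H : Finset (Finset α)) : Prop :=
  ∀ e ∈ H, ∀ f ∈ H, ∃ v, v ∈ e ∧ v ∈ f

/-- `H` is linear intersecting: every two distinct lines meet in exactly one vertex. -/
def LinearIntersecting {α : Type*} (H : Finset (Finset α)) : Prop :=
  ∀ e ∈ H, ∀ f ∈ H, e ≠ f → ∃! v, v ∈ e ∧ v ∈ f

/-- The vertices of `H` (i.e. the vertices of positive degree). -/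
def vertexSet {α : Type*} [DecidableEq α] (H : Finset (Finset α)) : Finset α :=
  H.sup id

/-- The degree of a vertex: the number of lines containing it. -/
def degree {α : Type*} [DecidableEq α] (H : Finset (Finset α)) (v : α) : ℕ :=
  (H.filter (fun e => v ∈ e)).card

/-- The maximum degree of `H`. -/
def maxDegree {α : Type*} [DecidableEq α] (H : Finset (Finset α)) : ℕ :=
  (vertexSet H).sup (degree H)

/-- Side `i` of an `r`-partite hypergraph: the vertices of `H` with first coordinate `i`. -/
def side {r : ℕ} {V : Type*} [DecidableEq V] (H : Finset (Finset (Fin r × V))) (i : Fin r) :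
    Finset (Fin r × V) :=
  (vertexSet H).filter (fun v => v.1 = i)

/-- If `H` is an intersecting `r`-partite hypergraph (`r ≥ 2`) with covering number
`r`, then every vertex of `H` has degree at least `2`. -/
theorem degree_ge_two {r : ℕ} {V : Type*} [DecidableEq V]
    (H : Finset (Finset (Fin r × V))) (hr : 2 ≤ r)
    (hpart : Rpartite H) (hint : Intersecting H) (htau : coverNumber H = r) :
    ∀ v ∈ vertexSet H, 2 ≤ degree H v := by
  intro v hv
  by_contra hdeg
  push_neg at hdeg
  -- v belongs to some line e
  obtain ⟨e, he, hve⟩ := Finset.mem_sup.mp hv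
  simp only [id] at hve
  have hef : e ∈ H.filter (fun f => v ∈ f) := Finset.mem_filter.mpr ⟨he, hve⟩
  have hd1 : degree H v = 1 := by
    have : 1 ≤ degree H v := Finset.card_pos.mpr ⟨e, hef⟩
    omega
  have huniq : ∀ f ∈ H, v ∈ f → f = e := by
    intro f hf hvf
    have hfe : f ∈ H.filter (fun g => v ∈ g) := Finset.mem_filter.mpr ⟨hf, hvf⟩
    have := Finset.card_le_one.mp (le_of_eq hd1) f hfe e hef
    exact this
  -- e has exactly r vertices
  have hcard : e.card = r := by
    have : e.card = (Finset.univ : Finset (Fin r)).card := by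
      apply Finset.card_bij (fun a _ => a.1)
      · intro a _; exact Finset.mem_univ _
      · intro a ha b hb hab
        obtain ⟨w, -, hwu⟩ := hpart e he a.1
        exact (hwu a ⟨ha, rfl⟩).trans (hwu b ⟨hb, hab.symm⟩).symm
      · intro i _
        obtain ⟨w, ⟨hw1, hw2⟩, -⟩ := hpart e he i
        exact ⟨w, hw1, hw2⟩
    simpa using this
  -- e.erase v is a cover of size r - 1
  have hcover : IsCover H (e.erase v) := by
    intro f hf
    by_cases hfe : f = e
    · subst hfe
      obtain ⟨w, hw, hwv⟩ := Finset.exists_mem_ne (show 1 < f.card by omega) v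
      exact ⟨w, hw, Finset.mem_erase.mpr ⟨hwv, hw⟩⟩
    · obtain ⟨w, hwe, hwf⟩ := hint e he f hf
      refine ⟨w, hwf, Finset.mem_erase.mpr ⟨?_, hwe⟩⟩
      rintro rfl
      exact hfe (huniq f hf hwf)
  have hle : coverNumber H ≤ r - 1 := by
    apply Nat.sInf_le
    exact ⟨e.erase v, hcover, by rw [Finset.card_erase_of_mem hve, hcard]⟩
  omega
end

section
/- Let H be an intersecting r-partite hypergraph with τ(H) = r. Then each line of H contains at most one vertex of degree 2. -/
lemma exists_other {α : Type*} [DecidableEq α] (H : Finset (Finset α)) (e : Finset α)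
    (he : e ∈ H) (u : α) (hu : degree H u = 2) (hue : u ∈ e) :
    ∃ f ∈ H, u ∈ f ∧ f ≠ e ∧ ∀ g ∈ H, u ∈ g → g = e ∨ g = f := by
  unfold degree at hu
  obtain ⟨a, b, hab, hs⟩ := Finset.card_eq_two.mp hu
  have heS : e ∈ H.filter (fun g => u ∈ g) := Finset.mem_filter.mpr ⟨he, hue⟩
  have hmem : ∀ g ∈ H, u ∈ g → g = a ∨ g = b := by
    intro g hg hug
    have : g ∈ H.filter (fun g => u ∈ g) := Finset.mem_filter.mpr ⟨hg, hug⟩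
    rw [hs] at this; simpa using this
  rw [hs] at heS
  simp only [Finset.mem_insert, Finset.mem_singleton] at heS
  rcases heS with rfl | rfl
  · have hbS : b ∈ H.filter (fun g => u ∈ g) := by rw [hs]; simp
    obtain ⟨hbH, hub⟩ := Finset.mem_filter.mp hbS
    exact ⟨b, hbH, hub, hab.symm, fun g hg hug => hmem g hg hug⟩
  · have haS : a ∈ H.filter (fun g => u ∈ g) := by rw [hs]; simp
    obtain ⟨haH, hua⟩ := Finset.mem_filter.mp haS
    exact ⟨a, haH, hua, hab, fun g hg hug => (hmem g hg hug).symm⟩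

lemma line_card {r : ℕ} {V : Type*} [DecidableEq V] (H : Finset (Finset (Fin r × V)))
    (hp : Rpartite H) {e : Finset (Fin r × V)} (he : e ∈ H) : e.card = r := by
  have hinj : Set.InjOn Prod.fst (e : Set (Fin r × V)) := by
    intro x hx y hy hxy
    obtain ⟨w, -, hun⟩ := hp e he x.1
    rw [hun x ⟨hx, rfl⟩, hun y ⟨hy, hxy.symm⟩]
  have himg : e.image Prod.fst = Finset.univ := by
    apply Finset.eq_univ_iff_forall.mpr
    intro i
    obtain ⟨w, ⟨hw, hw1⟩, -⟩ := hp e he i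
    exact Finset.mem_image.mpr ⟨w, hw, hw1⟩
  calc e.card = (e.image Prod.fst).card := (Finset.card_image_of_injOn hinj).symm
    _ = r := by rw [himg]; simp

lemma side_ne {r : ℕ} {V : Type*} [DecidableEq V] (H : Finset (Finset (Fin r × V)))
    (hp : Rpartite H) {e : Finset (Fin r × V)} (he : e ∈ H) {x y : Fin r × V}
    (hx : x ∈ e) (hy : y ∈ e) (hxy : x ≠ y) : x.1 ≠ y.1 := by
  intro h
  obtain ⟨w, -, hun⟩ := hp e he x.1
  exact hxy ((hun x ⟨hx, rfl⟩).trans (hun y ⟨hy, h.symm⟩).symm)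

/-- If `H` is an intersecting `r`-partite hypergraph with covering number `r`, then
every line of `H` contains at most one vertex of degree `2`. -/
theorem line_at_most_one_degree_two {r : ℕ} {V : Type*} [DecidableEq V]
    (H : Finset (Finset (Fin r × V)))
    (hpart : Rpartite H) (hint : Intersecting H) (htau : coverNumber H = r) :
    ∀ e ∈ H, (e.filter (fun v => degree H v = 2)).card ≤ 1 := by
  intro e he
  by_contra hcon
  push_neg at hcon
  obtain ⟨u, hu, v, hv, huv⟩ := Finset.one_lt_card.mp hcon
  rw [Finset.mem_filter] at hu hv
  obtain ⟨hue, hdu⟩ := hu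
  obtain ⟨hve, hdv⟩ := hv
  obtain ⟨eu, heu, hueu, heune, hunu⟩ := exists_other H e he u hdu hue
  obtain ⟨ev, hev, hvev, hevne, hunv⟩ := exists_other H e he v hdv hve
  have hcard := line_card H hpart he
  have hr2 : 2 ≤ r := hcard ▸ Finset.one_lt_card.mpr ⟨u, hue, v, hve, huv⟩
  have hle : ∀ C : Finset (Fin r × V), IsCover H C → r ≤ C.card := by
    intro C hC
    calc r = coverNumber H := htau.symm
      _ ≤ C.card := Nat.sInf_le ⟨C, hC, rfl⟩
  by_cases hcase : eu = ev
  · have hcov : IsCover H (e.erase v) := by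
      intro g hg
      by_cases hge : g = e
      · exact ⟨u, hge ▸ hue, Finset.mem_erase.mpr ⟨huv, hue⟩⟩
      · obtain ⟨x, hxg, hxe⟩ := hint g hg e he
        by_cases hxv : x = v
        · rcases hunv g hg (hxv ▸ hxg) with h | h
          · exact absurd h hge
          · exact ⟨u, by rw [h, ← hcase]; exact hueu, Finset.mem_erase.mpr ⟨huv, hue⟩⟩
        · exact ⟨x, hxg, Finset.mem_erase.mpr ⟨hxv, hxe⟩⟩
    have := hle _ hcov
    rw [Finset.card_erase_of_mem hve, hcard] at this
    omega
  · obtain ⟨w, hweu, hwev⟩ := hint eu heu ev hev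
    have hwu : w ≠ u := by
      rintro rfl
      rcases hunu ev hev hwev with h | h
      · exact hevne h
      · exact hcase h.symm
    have hwv : w ≠ v := by
      rintro rfl
      rcases hunv eu heu hweu with h | h
      · exact heune h
      · exact hcase h
    have h1 : u.1 ≠ v.1 := side_ne H hpart he hue hve huv
    have h2 : w.1 ≠ u.1 := side_ne H hpart heu hweu hueu hwu
    have h3 : w.1 ≠ v.1 := side_ne H hpart hev hwev hvev hwv
    have hr3 : 3 ≤ r := by
      have hsub : ({u.1, v.1, w.1} : Finset (Fin r)) ⊆ Finset.univ := Finset.subset_univ _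
      have h3c : ({u.1, v.1, w.1} : Finset (Fin r)).card = 3 := by
        rw [Finset.card_insert_of_notMem (by simp [h1, h2.symm]),
          Finset.card_insert_of_notMem (by simp [h3.symm]), Finset.card_singleton]
      have := Finset.card_le_card hsub
      simpa [h3c] using this
    have hvmem : v ∈ e.erase u := Finset.mem_erase.mpr ⟨huv.symm, hve⟩
    have hcc : ((e.erase u).erase v).card = r - 2 := by
      rw [Finset.card_erase_of_mem hvmem, Finset.card_erase_of_mem hue, hcard]
      omega
    have hne : ((e.erase u).erase v).Nonempty := Finset.card_pos.mp (by omega)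
    obtain ⟨y, hy⟩ := hne
    have hye : y ∈ e := Finset.mem_of_mem_erase (Finset.mem_of_mem_erase hy)
    have hcov : IsCover H (insert w ((e.erase u).erase v)) := by
      intro g hg
      obtain ⟨x, hxg, hxe⟩ := hint g hg e he
      by_cases hxu : x = u
      · rcases hunu g hg (hxu ▸ hxg) with rfl | rfl
        · exact ⟨y, hye, Finset.mem_insert_of_mem hy⟩
        · exact ⟨w, hweu, Finset.mem_insert_self _ _⟩
      · by_cases hxv : x = v
        · rcases hunv g hg (hxv ▸ hxg) with rfl | rfl
          · exact ⟨y, hye, Finset.mem_insert_of_mem hy⟩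
          · exact ⟨w, hwev, Finset.mem_insert_self _ _⟩
        · exact ⟨x, hxg, Finset.mem_insert_of_mem
            (Finset.mem_erase.mpr ⟨hxv, Finset.mem_erase.mpr ⟨hxu, hxe⟩⟩)⟩
    have hC := hle _ hcov
    have := Finset.card_insert_le w ((e.erase u).erase v)
    omega
end

section
/- Let H be an intersecting r-partite hypergraph with τ(H) = r in which every vertex has positive degree. Then the maximum degree Δ(H) is at least 4. -/
/-!
Suppose `Δ(H) ≤ 3`. For `r = 2` an intersecting bipartite hypergraph has a vertex lying on
all lines, so `τ ≤ 1`. For `r ≥ 3`, since `τ = r`, no `e \ {v}` (`v ∈ e ∈ H`) is a cover, which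
gives a line meeting `e` only in `v`; hence every vertex has degree at least `2`. Two vertices
`v ≠ w` of degree `2` on one line `e`, with other lines `f_v ∋ v`, `f_w ∋ w` meeting in `x`,
would give the cover `(e \ {v, w}) ∪ {x}` of size `r - 1`; so each line carries at most one
vertex of degree `2`. Now count: every side is a cover, so `|V| ≥ r²`; the set `D₂` of
degree-`2` vertices satisfies `3|V| ≤ ∑ deg + |D₂| = r|H| + |D₂|` and `2|D₂| ≤ |H|`; and
`|H| ≤ 2r + 1` since every line meets a fixed line in one of its `r` vertices, each lying
on at most two further lines. Hence `6r² ≤ (2r + 1)²`, which fails for `r ≥ 3`.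
-/

open Finset

section Cover

variable {α : Type*} {H : Finset (Finset α)}

theorem coverNumber_le_card {C : Finset α} (hC : IsCover H C) : coverNumber H ≤ C.card :=
  Nat.sInf_le ⟨C, hC, rfl⟩

theorem nonempty_of_coverNumber_pos (h : 0 < coverNumber H) : H.Nonempty := by
  rw [nonempty_iff_ne_empty]
  rintro rfl
  have := coverNumber_le_card (C := (∅ : Finset α)) (fun e he => absurd he (notMem_empty e))
  simp at this
  omega

end Cover

section Degree

variable {α : Type*} [DecidableEq α] {H : Finset (Finset α)} {e f : Finset α} {v : α}

theorem mem_vertexSet (he : e ∈ H) (hv : v ∈ e) : v ∈ vertexSet H :=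
  mem_sup.mpr ⟨e, he, hv⟩

theorem subset_vertexSet (he : e ∈ H) : e ⊆ vertexSet H :=
  le_sup (f := id) he

theorem degree_le_maxDegree (hv : v ∈ vertexSet H) : degree H v ≤ maxDegree H :=
  le_sup hv

theorem sum_degree_eq_sum_card_filter (A : Finset α) :
    ∑ v ∈ A, degree H v = ∑ e ∈ H, (A.filter (· ∈ e)).card := by
  simp only [degree, card_filter]
  exact sum_comm

theorem sum_degree_vertexSet : ∑ v ∈ vertexSet H, degree H v = ∑ e ∈ H, e.card := by
  rw [sum_degree_eq_sum_card_filter]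
  refine sum_congr rfl fun e he => ?_
  rw [filter_mem_eq_inter, inter_eq_right.mpr (subset_vertexSet he)]

theorem eq_or_eq_of_degree_eq_two (hv : degree H v = 2) (he : e ∈ H) (hve : v ∈ e)
    (hf : f ∈ H) (hvf : v ∈ f) (hef : e ≠ f) {g : Finset α} (hg : g ∈ H) (hvg : v ∈ g) :
    g = e ∨ g = f := by
  have hsub : {e, f} ⊆ H.filter (v ∈ ·) := by
    simp only [insert_subset_iff, singleton_subset_iff, mem_filter]
    exact ⟨⟨he, hve⟩, hf, hvf⟩
  have hpair := eq_of_subset_of_card_le hsub (by rw [card_pair hef]; exact hv.le)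
  simpa [← hpair] using (mem_filter.mpr ⟨hg, hvg⟩ : g ∈ H.filter (v ∈ ·))

theorem two_mul_card_filter_degree_eq_two_le
    (h : ∀ e ∈ H, (e.filter (degree H · = 2)).card ≤ 1) :
    2 * ((vertexSet H).filter (degree H · = 2)).card ≤ H.card := by
  set D := (vertexSet H).filter (degree H · = 2)
  calc 2 * D.card = ∑ v ∈ D, degree H v := by
        rw [sum_congr rfl fun v hv => (mem_filter.mp hv).2, sum_const, smul_eq_mul, mul_comm]
    _ = ∑ e ∈ H, (D.filter (· ∈ e)).card := sum_degree_eq_sum_card_filter D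
    _ ≤ ∑ _e ∈ H, 1 := sum_le_sum fun e he => (card_le_card fun v hv => by
        simp only [D, mem_filter] at hv ⊢
        exact ⟨hv.2, hv.1.2⟩).trans (h e he)
    _ = H.card := (card_eq_sum_ones H).symm

theorem three_mul_card_vertexSet_le
    (h : ∀ v ∈ vertexSet H, 2 ≤ degree H v ∧ degree H v ≤ 3) :
    3 * (vertexSet H).card ≤
      ∑ e ∈ H, e.card + ((vertexSet H).filter (degree H · = 2)).card := by
  rw [← sum_degree_vertexSet, card_filter, ← sum_add_distrib, mul_comm, ← smul_eq_mul,
    ← sum_const]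
  refine sum_le_sum fun v hv => ?_
  have := h v hv
  split_ifs <;> omega

end Degree

section Intersecting

variable {α : Type*} [DecidableEq α] {H : Finset (Finset α)} {e : Finset α} {v : α}

theorem Intersecting.exists_inter_eq_singleton (hint : Intersecting H) (he : e ∈ H)
    (hτ : e.card ≤ coverNumber H) (hv : v ∈ e) : ∃ f ∈ H, f ∩ e = {v} := by
  have hnc : ¬ IsCover H (e.erase v) := fun hC => by
    have := coverNumber_le_card hC
    rw [card_erase_of_mem hv] at this
    have := card_pos.mpr ⟨v, hv⟩
    omega
  simp only [IsCover, mem_erase, not_forall, not_exists, not_and] at hnc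
  obtain ⟨f, hf, hfe⟩ := hnc
  have honly : ∀ u ∈ f, u ∈ e → u = v := fun u huf hue => by_contra fun h => hfe u huf h hue
  obtain ⟨u, hue, huf⟩ := hint e he f hf
  refine ⟨f, hf, eq_singleton_iff_unique_mem.mpr ⟨?_, fun u hu => ?_⟩⟩
  · exact honly u huf hue ▸ mem_inter.mpr ⟨huf, hue⟩
  · exact honly u (mem_inter.mp hu).1 (mem_inter.mp hu).2

theorem Intersecting.exists_ne_mem (hint : Intersecting H) (he : e ∈ H) (h2 : 2 ≤ e.card)
    (hτ : e.card ≤ coverNumber H) (hv : v ∈ e) : ∃ f ∈ H, f ≠ e ∧ v ∈ f := by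
  obtain ⟨f, hf, hfe⟩ := hint.exists_inter_eq_singleton he hτ hv
  refine ⟨f, hf, ?_, mem_of_mem_inter_left (hfe ▸ mem_singleton_self v)⟩
  rintro rfl
  rw [inter_self] at hfe
  simp [hfe] at h2

theorem Intersecting.two_le_degree (hint : Intersecting H) (he : e ∈ H) (h2 : 2 ≤ e.card)
    (hτ : e.card ≤ coverNumber H) (hv : v ∈ e) : 2 ≤ degree H v := by
  obtain ⟨f, hf, hfe, hvf⟩ := hint.exists_ne_mem he h2 hτ hv
  exact one_lt_card.mpr ⟨e, mem_filter.mpr ⟨he, hv⟩, f, mem_filter.mpr ⟨hf, hvf⟩, hfe.symm⟩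

theorem Intersecting.card_filter_degree_eq_two_le_one (hint : Intersecting H) (he : e ∈ H)
    (h3 : 3 ≤ e.card) (hτ : e.card ≤ coverNumber H) :
    (e.filter (degree H · = 2)).card ≤ 1 := by
  by_contra! hlt
  obtain ⟨v, hv, w, hw, hvw⟩ := one_lt_card.mp hlt
  rw [mem_filter] at hv hw
  obtain ⟨fv, hfv, hfve, hvfv⟩ := hint.exists_ne_mem he (by omega) hτ hv.1
  obtain ⟨fw, hfw, hfwe, hwfw⟩ := hint.exists_ne_mem he (by omega) hτ hw.1
  obtain ⟨x, hxv, hxw⟩ := hint fv hfv fw hfw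
  have hcard : ((e.erase v).erase w).card = e.card - 2 := by
    rw [card_erase_of_mem (mem_erase.mpr ⟨hvw.symm, hw.1⟩), card_erase_of_mem hv.1]
    omega
  obtain ⟨z, hz⟩ : ((e.erase v).erase w).Nonempty := card_pos.mp (by omega)
  have hze : z ∈ e := mem_of_mem_erase (mem_of_mem_erase hz)
  -- the only lines through `v` (resp. `w`) are `e ∋ z` and `fv ∋ x` (resp. `fw ∋ x`)
  have hcov : IsCover H (insert x ((e.erase v).erase w)) := by
    intro g hg
    obtain ⟨u, hue, hug⟩ := hint e he g hg
    by_cases huv : u = v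
    · subst huv
      rcases eq_or_eq_of_degree_eq_two hv.2 he hue hfv hvfv hfve.symm hg hug with rfl | rfl
      · exact ⟨z, hze, mem_insert_of_mem hz⟩
      · exact ⟨x, hxv, mem_insert_self _ _⟩
    by_cases huw : u = w
    · subst huw
      rcases eq_or_eq_of_degree_eq_two hw.2 he hue hfw hwfw hfwe.symm hg hug with rfl | rfl
      · exact ⟨z, hze, mem_insert_of_mem hz⟩
      · exact ⟨x, hxw, mem_insert_self _ _⟩
    exact ⟨u, hug, mem_insert_of_mem (mem_erase.mpr ⟨huw, mem_erase.mpr ⟨huv, hue⟩⟩)⟩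
  have := (coverNumber_le_card hcov).trans (card_insert_le _ _)
  omega

theorem Intersecting.card_le_of_degree_le (hint : Intersecting H) (he : e ∈ H) {d : ℕ}
    (hd : ∀ v ∈ e, degree H v ≤ d) : H.card ≤ e.card * (d - 1) + 1 := by
  have hsub : H.erase e ⊆ e.biUnion fun v => (H.filter (v ∈ ·)).erase e := by
    intro g hg
    obtain ⟨v, hve, hvg⟩ := hint e he g (mem_of_mem_erase hg)
    exact mem_biUnion.mpr
      ⟨v, hve, mem_erase.mpr ⟨ne_of_mem_erase hg, mem_filter.mpr ⟨mem_of_mem_erase hg, hvg⟩⟩⟩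
  calc H.card = (H.erase e).card + 1 := (card_erase_add_one he).symm
    _ ≤ ∑ v ∈ e, ((H.filter (v ∈ ·)).erase e).card + 1 := by
      gcongr
      exact (card_le_card hsub).trans card_biUnion_le
    _ ≤ ∑ _v ∈ e, (d - 1) + 1 := by
      gcongr with v hv
      rw [card_erase_of_mem (mem_filter.mpr ⟨he, hv⟩)]
      exact Nat.sub_le_sub_right (hd v hv) 1
    _ = e.card * (d - 1) + 1 := by rw [sum_const, smul_eq_mul]

end Intersecting

section Rpartite

variable {r : ℕ} {V : Type*} {H : Finset (Finset (Fin r × V))} {e : Finset (Fin r × V)}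

theorem Rpartite.eq_of_fst_eq (hpart : Rpartite H) (he : e ∈ H) {a b : Fin r × V}
    (ha : a ∈ e) (hb : b ∈ e) (hab : a.1 = b.1) : a = b :=
  (hpart e he b.1).unique ⟨ha, hab⟩ ⟨hb, rfl⟩

theorem Rpartite.card_eq (hpart : Rpartite H) (he : e ∈ H) : e.card = r := by
  simpa using card_bij (t := univ) (fun v _ => v.1) (fun _ _ => mem_univ _)
    (fun _ ha _ hb => hpart.eq_of_fst_eq he ha hb)
    (fun i _ => let ⟨v, hv, _⟩ := hpart e he i; ⟨v, hv.1, hv.2⟩)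

variable [DecidableEq V]

theorem Rpartite.isCover_side (hpart : Rpartite H) (i : Fin r) : IsCover H (side H i) :=
  fun e he =>
    let ⟨v, hv, _⟩ := hpart e he i
    ⟨v, hv.1, mem_filter.mpr ⟨mem_vertexSet he hv.1, hv.2⟩⟩

theorem sum_card_side (H : Finset (Finset (Fin r × V))) :
    ∑ i, (side H i).card = (vertexSet H).card :=
  (card_eq_sum_card_fiberwise fun v _ => mem_univ v.1).symm

theorem Rpartite.mul_coverNumber_le (hpart : Rpartite H) :
    r * coverNumber H ≤ (vertexSet H).card :=
  calc r * coverNumber H = ∑ _i : Fin r, coverNumber H := by simp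
    _ ≤ ∑ i, (side H i).card :=
      sum_le_sum fun i _ => coverNumber_le_card (hpart.isCover_side i)
    _ = (vertexSet H).card := sum_card_side H

theorem Rpartite.coverNumber_le_one {H : Finset (Finset (Fin 2 × V))} (hpart : Rpartite H)
    (hint : Intersecting H) : coverNumber H ≤ 1 := by
  by_contra! hτ
  have hmiss : ∀ x, ∃ e ∈ H, x ∉ e := fun x => by
    by_contra! hx
    have := coverNumber_le_card (C := {x}) fun e he => ⟨x, hx e he, mem_singleton_self x⟩
    simp at this
    omega
  obtain ⟨e₀, he₀⟩ := nonempty_of_coverNumber_pos (H := H) (by omega)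
  obtain ⟨x, ⟨hx, hx0⟩, hxu⟩ := hpart e₀ he₀ 0
  obtain ⟨y, ⟨hy, hy1⟩, hyu⟩ := hpart e₀ he₀ 1
  have he₀xy : ∀ u ∈ e₀, u = x ∨ u = y := fun u hu =>
    (Fin.forall_fin_two (p := fun i => u.1 = i → u = x ∨ u = y)).mpr
      ⟨fun h => .inl (hxu u ⟨hu, h⟩), fun h => .inr (hyu u ⟨hu, h⟩)⟩ u.1 rfl
  obtain ⟨e, he, hxe⟩ := hmiss x
  obtain ⟨f, hf, hyf⟩ := hmiss y
  have hye : y ∈ e := by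
    obtain ⟨u, hu₀, hue⟩ := hint e₀ he₀ e he
    rcases he₀xy u hu₀ with rfl | rfl
    exacts [absurd hue hxe, hue]
  have hxf : x ∈ f := by
    obtain ⟨u, hu₀, huf⟩ := hint e₀ he₀ f hf
    rcases he₀xy u hu₀ with rfl | rfl
    exacts [huf, absurd huf hyf]
  -- `e` and `f` meet outside the line `{x, y}`, on the side of `x` or of `y`
  obtain ⟨w, hwe, hwf⟩ := hint e he f hf
  refine (Fin.forall_fin_two (p := fun i => w.1 ≠ i)).mpr ⟨fun hw => ?_, fun hw => ?_⟩ w.1 rfl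
  · exact hxe (hpart.eq_of_fst_eq hf hwf hxf (hw.trans hx0.symm) ▸ hwe)
  · exact hyf (hpart.eq_of_fst_eq he hwe hye (hw.trans hy1.symm) ▸ hwf)

end Rpartite

/-- If `H` is an intersecting `r`-partite hypergraph (`r ≥ 2`) with covering number
`r`, then its maximum degree is at least `4`. -/
theorem maxDegree_ge_four {r : ℕ} {V : Type*} [DecidableEq V]
    (H : Finset (Finset (Fin r × V))) (hr : 2 ≤ r)
    (hpart : Rpartite H) (hint : Intersecting H) (htau : coverNumber H = r) :
    4 ≤ maxDegree H := by
  by_contra! hΔ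
  have hcard (e) (he : e ∈ H) : e.card = coverNumber H := (hpart.card_eq he).trans htau.symm
  obtain ⟨e₀, he₀⟩ := nonempty_of_coverNumber_pos (H := H) (by omega)
  rcases hr.eq_or_lt with rfl | hr3
  · have := hpart.coverNumber_le_one hint
    omega
  have hdeg : ∀ v ∈ vertexSet H, 2 ≤ degree H v ∧ degree H v ≤ 3 := fun v hv => by
    obtain ⟨e, he, hve⟩ := mem_sup.mp hv
    exact ⟨hint.two_le_degree he (hr.trans (hpart.card_eq he).ge) (hcard e he).le hve,
      by have := degree_le_maxDegree hv; omega⟩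
  have hV := hpart.mul_coverNumber_le
  have h3V := three_mul_card_vertexSet_le hdeg
  have hD2 := two_mul_card_filter_degree_eq_two_le fun e he =>
    hint.card_filter_degree_eq_two_le_one he (hr3.trans_le (hpart.card_eq he).ge) (hcard e he).le
  have hH := hint.card_le_of_degree_le he₀ fun v hv => (hdeg v (mem_vertexSet he₀ hv)).2
  rw [sum_congr rfl hcard, sum_const, smul_eq_mul] at h3V
  rw [hcard e₀ he₀] at hH
  nlinarith
end

section
/- Let H be a linear intersecting r-partite hypergraph with τ(H) = r in which every vertex has positive degree. Then the maximum degree Δ(H) is at most r − 2. -/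
/-- If `H` is a linear intersecting `r`-partite hypergraph (`r ≥ 2`) with covering
number `r`, then its maximum degree is at most `r - 2`. -/
theorem maxDegree_le_r_sub_two {r : ℕ} {V : Type*} [DecidableEq V]
    (H : Finset (Finset (Fin r × V))) (hr : 2 ≤ r)
    (hpart : Rpartite H) (hlin : LinearIntersecting H) (htau : coverNumber H = r) :
    maxDegree H ≤ r - 2 := by
  classical
  obtain ⟨k, rfl⟩ : ∃ k, r = k + 2 := ⟨r - 2, by omega⟩
  by_contra hΔ
  push_neg at hΔ
  have hΔ' : k + 1 ≤ maxDegree H := by omega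
  rw [maxDegree, Finset.le_sup_iff (by omega : (0:ℕ) < k+1)] at hΔ'
  obtain ⟨v, hvmem, hdeg⟩ := hΔ'
  set i₀ := v.1 with hi₀
  -- there is a line not through `v`
  obtain ⟨e, he, hve⟩ : ∃ e ∈ H, v ∉ e := by
    by_contra h
    push_neg at h
    have hcov : IsCover H {v} := fun f hf => ⟨v, h f hf, Finset.mem_singleton_self v⟩
    have : coverNumber H ≤ 1 := Nat.sInf_le ⟨{v}, hcov, Finset.card_singleton v⟩
    omega
  set F := H.filter (fun f => v ∈ f) with hF
  have hFmem : ∀ f ∈ F, f ∈ H ∧ v ∈ f := by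
    intro f hf; exact Finset.mem_filter.mp hf
  -- common point facts
  have hcommon : ∀ h ∈ H, v ∉ h → ∀ f ∈ F,
      ∃ p, (p ∈ h ∧ p ∈ f) ∧ p.1 ≠ i₀ ∧ (h ∩ f).image Prod.fst = {p.1} := by
    intro h hh hvh f hf
    obtain ⟨hfH, hvf⟩ := hFmem f hf
    have hne : h ≠ f := by rintro rfl; exact hvh hvf
    obtain ⟨p, ⟨hph, hpf⟩, huniq⟩ := hlin h hh f hfH hne
    have hpv : p ≠ v := fun hpv => hvh (hpv ▸ hph)
    have hp1 : p.1 ≠ i₀ := by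
      intro hp1
      obtain ⟨q, _, hq⟩ := hpart f hfH i₀
      exact hpv ((hq p ⟨hpf, hp1⟩).trans (hq v ⟨hvf, rfl⟩).symm)
    refine ⟨p, ⟨hph, hpf⟩, hp1, ?_⟩
    ext i
    simp only [Finset.mem_image, Finset.mem_inter, Finset.mem_singleton]
    constructor
    · rintro ⟨q, ⟨hq1, hq2⟩, rfl⟩
      rw [huniq q ⟨hq1, hq2⟩]
    · rintro rfl
      exact ⟨p, ⟨hph, hpf⟩, rfl⟩
  -- injectivity of the "side of common point" map
  have hinj : ∀ h ∈ H, v ∉ h →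
      Set.InjOn (fun f => (h ∩ f).image Prod.fst) F := by
    intro h hh hvh f₁ hf₁ f₂ hf₂ heq
    simp only at heq
    obtain ⟨p₁, ⟨hp₁h, hp₁f⟩, hp₁i, himg₁⟩ := hcommon h hh hvh f₁ hf₁
    obtain ⟨p₂, ⟨hp₂h, hp₂f⟩, hp₂i, himg₂⟩ := hcommon h hh hvh f₂ hf₂
    rw [himg₁, himg₂] at heq
    have hps : p₁.1 = p₂.1 := Finset.singleton_injective heq
    have hpp : p₁ = p₂ := by
      obtain ⟨q, _, hq⟩ := hpart h hh p₁.1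
      exact (hq p₁ ⟨hp₁h, rfl⟩).trans (hq p₂ ⟨hp₂h, hps.symm⟩).symm
    by_contra hne
    obtain ⟨q, _, hq⟩ := hlin f₁ (hFmem f₁ hf₁).1 f₂ (hFmem f₂ hf₂).1 hne
    have h1 : v = q := hq v ⟨(hFmem f₁ hf₁).2, (hFmem f₂ hf₂).2⟩
    have h2 : p₁ = q := hq p₁ ⟨hp₁f, hpp ▸ hp₂f⟩
    exact hvh ((h1.trans h2.symm) ▸ hp₁h)
  -- the target set of sides
  set T : Finset (Finset (Fin (k+2))) :=
    (Finset.univ.erase i₀).image (fun i => ({i} : Finset (Fin (k+2)))) with hT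
  have hTcard : T.card = k + 1 := by
    rw [hT, Finset.card_image_of_injective _ Finset.singleton_injective,
      Finset.card_erase_of_mem (Finset.mem_univ _), Finset.card_univ, Fintype.card_fin]
    omega
  have hmaps : ∀ h ∈ H, v ∉ h → ∀ f ∈ F, (h ∩ f).image Prod.fst ∈ T := by
    intro h hh hvh f hf
    obtain ⟨p, _, hpi, himg⟩ := hcommon h hh hvh f hf
    rw [himg, hT]
    exact Finset.mem_image.mpr ⟨p.1, Finset.mem_erase.mpr ⟨hpi, Finset.mem_univ _⟩, rfl⟩
  -- degree of v is exactly k+1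
  have hFcard : F.card = k + 1 := by
    have hle : F.card ≤ k + 1 := by
      have := Finset.card_le_card_of_injOn (fun f => (e ∩ f).image Prod.fst)
        (fun f hf => hmaps e he hve f hf) (hinj e he hve)
      omega
    have hge : k + 1 ≤ F.card := hdeg
    omega
  -- surjectivity onto T for every line h missing v
  have hsurj : ∀ h ∈ H, v ∉ h → F.image (fun f => (h ∩ f).image Prod.fst) = T := by
    intro h hh hvh
    apply Finset.eq_of_subset_of_card_le
    · intro x hx
      obtain ⟨f, hf, rfl⟩ := Finset.mem_image.mp hx
      exact hmaps h hh hvh f hf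
    · rw [Finset.card_image_of_injOn (hinj h hh hvh), hFcard, hTcard]
  -- pick another side s
  have : Nontrivial (Fin (k+2)) := ⟨⟨0, 1, by
    intro h0
    have := congrArg Fin.val h0
    simp at this⟩⟩
  obtain ⟨s, hs⟩ := exists_ne i₀
  -- the cover
  set C : Finset (Fin (k+2) × V) :=
    F.biUnion (fun f => f.filter (fun p => p.1 = s)) with hC
  have hCcard : C.card ≤ k + 1 := by
    calc C.card ≤ ∑ f ∈ F, (f.filter (fun p => p.1 = s)).card :=
          Finset.card_biUnion_le
      _ ≤ ∑ _f ∈ F, 1 := by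
          apply Finset.sum_le_sum
          intro f hf
          apply Finset.card_le_one.mpr
          intro a ha b hb
          obtain ⟨q, _, hq⟩ := hpart f (hFmem f hf).1 s
          have ha' := Finset.mem_filter.mp ha
          have hb' := Finset.mem_filter.mp hb
          exact (hq a ⟨ha'.1, ha'.2⟩).trans (hq b ⟨hb'.1, hb'.2⟩).symm
      _ = F.card := by simp
      _ = k + 1 := hFcard
  have hCcover : IsCover H C := by
    intro h hh
    by_cases hvh : v ∈ h
    · have hhF : h ∈ F := Finset.mem_filter.mpr ⟨hh, hvh⟩
      obtain ⟨q, ⟨hqh, hqs⟩, _⟩ := hpart h hh s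
      exact ⟨q, hqh, Finset.mem_biUnion.mpr ⟨h, hhF, Finset.mem_filter.mpr ⟨hqh, hqs⟩⟩⟩
    · have hsT : ({s} : Finset (Fin (k+2))) ∈ T := by
        rw [hT]
        exact Finset.mem_image.mpr ⟨s, Finset.mem_erase.mpr ⟨hs, Finset.mem_univ _⟩, rfl⟩
      rw [← hsurj h hh hvh] at hsT
      obtain ⟨f, hfF, hfs⟩ := Finset.mem_image.mp hsT
      have : s ∈ (h ∩ f).image Prod.fst := by
        rw [hfs]; exact Finset.mem_singleton_self s
      obtain ⟨p, hp, hp1⟩ := Finset.mem_image.mp this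
      obtain ⟨hph, hpf⟩ := Finset.mem_inter.mp hp
      exact ⟨p, hph, Finset.mem_biUnion.mpr ⟨f, hfF, Finset.mem_filter.mpr ⟨hpf, hp1⟩⟩⟩
  have : coverNumber H ≤ C.card := Nat.sInf_le ⟨C, hCcover, rfl⟩
  omega
end

section
/- The 13-partite hypergraph H obtained by taking all 39 cyclic shifts of the starter lines e₁ = [0,1,4,2,3,5,6,6,5,3,2,4,1], e₂ = [0,3,7,1,2,8,9,9,8,2,1,7,3], e₃ = [0,2,10,3,1,11,12,12,11,1,3,10,2] is linear intersecting, i.e., every two distinct lines meet in exactly one vertex. -/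
/-- First starter line. -/
def e1 : Fin 13 → Fin 13 := ![0, 1, 4, 2, 3, 5, 6, 6, 5, 3, 2, 4, 1]

/-- Second starter line. -/
def e2 : Fin 13 → Fin 13 := ![0, 3, 7, 1, 2, 8, 9, 9, 8, 2, 1, 7, 3]

/-- Third starter line. -/
def e3 : Fin 13 → Fin 13 := ![0, 2, 10, 3, 1, 11, 12, 12, 11, 1, 3, 10, 2]

/-- The cyclic `t`-shift of the line whose entry in position `k` is `f k`:
its entry in position `k` is `f (k - t)`. -/
def shiftLine (f : Fin 13 → Fin 13) (t : Fin 13) : Finset (Fin 13 × Fin 13) :=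
  Finset.univ.image (fun k : Fin 13 => (k, f (k - t)))

/-- The hypergraph consisting of all 39 cyclic shifts of the three starter lines. -/
def H39 : Finset (Finset (Fin 13 × Fin 13)) :=
  Finset.univ.image (fun p : Fin 3 × Fin 13 =>
    shiftLine (if p.1 = 0 then e1 else if p.1 = 1 then e2 else e3) p.2)


/-- Auxiliary: the starter function of index `i`. -/
def Lstar (i : Fin 3) : Fin 13 → Fin 13 :=
  if i = 0 then e1 else if i = 1 then e2 else e3

set_option maxRecDepth 10000 in
lemma key_unique : ∀ p q : Fin 3 × Fin 13, p ≠ q →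
    ∃! k : Fin 13, Lstar p.1 (k - p.2) = Lstar q.1 (k - q.2) := by
  unfold ExistsUnique
  decide

lemma mem_shiftLine {f : Fin 13 → Fin 13} {t : Fin 13} {v : Fin 13 × Fin 13} :
    v ∈ shiftLine f t ↔ v.2 = f (v.1 - t) := by
  simp only [shiftLine, Finset.mem_image, Finset.mem_univ, true_and]
  constructor
  · rintro ⟨k, rfl⟩; rfl
  · intro h; exact ⟨v.1, by rw [← h]⟩

/-- The hypergraph of all 39 cyclic shifts of the three starter lines is linear
intersecting: every two distinct lines meet in exactly one vertex. -/
theorem H39_linearIntersecting : LinearIntersecting H39 := by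
  intro e he f hf hne
  obtain ⟨p, -, rfl⟩ := Finset.mem_image.mp he
  obtain ⟨q, -, rfl⟩ := Finset.mem_image.mp hf
  have hpq : p ≠ q := by rintro rfl; exact hne rfl
  obtain ⟨k, hk, huniq⟩ := key_unique p q hpq
  have hL : ∀ r : Fin 3 × Fin 13,
      (if r.1 = 0 then e1 else if r.1 = 1 then e2 else e3) = Lstar r.1 := fun r => rfl
  rw [hL p, hL q]
  refine ⟨(k, Lstar p.1 (k - p.2)), ⟨mem_shiftLine.mpr rfl, mem_shiftLine.mpr hk⟩, ?_⟩
  rintro ⟨a, b⟩ ⟨h1, h2⟩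
  have h1' := mem_shiftLine.mp h1
  have h2' := mem_shiftLine.mp h2
  have ha : a = k := huniq a (h1'.symm.trans h2')
  subst ha
  exact Prod.ext rfl h1'
end
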